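/- arXiv:2304.11355 — 2 statements merged into one kernel-verified Lean document; each statement's English description precedes it below -/
import Mathlib

section
/- Let k be a field, R = k[[t]], K = k((t)), r ≥ 2, and let ψ ∈ M_r(R) be an r×r matrix over R such that: the (1,1) entry has t-adic valuation exactly 1, the (i,i) entries for i > 1 have valuation 0 (are units), and all off-diagonal entries have valuation at least 2. Let h = det(ψ), which has valuation exactly 1. Then the unique matrix g ∈ SL_r(K) satisfying ψ = g · diag(h, 1, …, 1) has all entries in R, i.e., g ∈ SL_r(R). -/
/-!
Since `ψ` agrees with its diagonal modulo `t²`, only the diagonal term of the Leibniz expansion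
has valuation `1`, so `h = det ψ` has valuation exactly `1`. The entries of the first column all
have valuation at least `1`, hence are divisible by `h`; dividing that column by `h` gives
`g ∈ M_r(R)` with `ψ = g · diag(h, 1, …, 1)`, and `det g = 1` because `det g · h = det ψ = h`.
Over `K` the diagonal factor is invertible, which gives uniqueness.
-/

open PowerSeries

namespace PowerSeries

theorem le_order_sum {R ι : Type*} [Semiring R] (s : Finset ι) (φ : ι → R⟦X⟧) {n : ℕ∞}
    (h : ∀ i ∈ s, n ≤ (φ i).order) : n ≤ (∑ i ∈ s, φ i).order := by
  induction s using Finset.cons_induction with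
  | empty => simp
  | cons a s ha ih =>
    rw [Finset.sum_cons]
    refine le_trans (le_min (h a (by simp)) (ih fun i hi => h i (by simp [hi])))
      (min_order_le_order_add _ _)

theorem dvd_of_order_le {k : Type*} [Field k] {φ ψ : k⟦X⟧} (hφ : φ ≠ 0)
    (h : φ.order ≤ ψ.order) : φ ∣ ψ := by
  rw [← X_pow_order_mul_divXPowOrder (f := φ), (isUnit_divided_by_X_pow_order hφ).mul_right_dvd,
    pow_dvd_iff_le_emultiplicity, ← order_eq_emultiplicity_X, coe_toNat_order hφ]
  exact h

theorem order_det_eq_of_lt_order_offDiag {R n : Type*} [CommRing R] [Fintype n] [DecidableEq n]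
    (A : Matrix n n R⟦X⟧) {d : ℕ} (hdiag : (∏ i, A i i).order = d)
    (hoff : ∀ i j, i ≠ j → (d : ℕ∞) < (A i j).order) : A.det.order = d := by
  rw [Matrix.det_apply', ← Finset.add_sum_erase _ _ (Finset.mem_univ 1)]
  have hrest : (d + 1 : ℕ∞) ≤ (∑ σ ∈ Finset.univ.erase (1 : Equiv.Perm n),
      (Equiv.Perm.sign σ : R⟦X⟧) * ∏ i, A (σ i) i).order := by
    refine le_order_sum _ _ fun σ hσ => Order.add_one_le_of_lt ?_
    obtain ⟨i, hi⟩ : ∃ i, σ i ≠ i :=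
      not_forall.mp fun hσ1 => Finset.ne_of_mem_erase hσ (Equiv.ext hσ1)
    calc (d : ℕ∞) < (A (σ i) i).order := hoff _ _ hi
      _ ≤ ∑ j, (A (σ j) j).order :=
        Finset.single_le_sum (f := fun j => (A (σ j) j).order) (fun _ _ => zero_le)
          (Finset.mem_univ i)
      _ ≤ (∏ j, A (σ j) j).order := le_order_prod _ _
      _ ≤ _ := le_add_self.trans (le_order_mul _ _)
  have hlt : (d : ℕ∞) < d + 1 := by exact_mod_cast Nat.lt_succ_self d
  simp only [Equiv.Perm.sign_one, Units.val_one, Int.cast_one, one_mul, Equiv.Perm.coe_one,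
    id_eq]
  rw [order_add_of_order_ne _ _ (hdiag ▸ (hlt.trans_le hrest).ne), hdiag]
  exact min_eq_left (hlt.le.trans hrest)

end PowerSeries

namespace Matrix

variable {n R : Type*} [Fintype n] [DecidableEq n]

theorem eq_updateCol_mul_diagonal [Semiring R] (A : Matrix n n R) (j : n) (a : R) (c : n → R)
    (hc : ∀ i, A i j = c i * a) :
    A = A.updateCol j c * diagonal (fun i => if i = j then a else 1) := by
  ext i l
  rw [mul_diagonal]
  by_cases hl : l = j
  · subst hl
    simp [hc]
  · simp [hl]

theorem det_updateCol_mul_eq_det [CommRing R] (A : Matrix n n R) (j : n) (a : R) (c : n → R)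
    (hc : ∀ i, A i j = c i * a) : (A.updateCol j c).det * a = A.det := by
  conv_rhs => rw [← updateCol_eq_self A j, show (fun i => A i j) = a • c by
    ext i; simp [hc, mul_comm]]
  rw [det_updateCol_smul, mul_comm]

theorem eq_of_mul_diagonal_eq_mul_diagonal [Semiring R] [IsRightCancelMulZero R]
    {A B : Matrix n n R} {d : n → R} (hd : ∀ i, d i ≠ 0)
    (h : A * diagonal d = B * diagonal d) : A = B := by
  ext i j
  have := congr_fun₂ h i j
  rw [mul_diagonal, mul_diagonal] at this
  exact mul_right_cancel₀ (hd j) this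

end Matrix

/-- Let `R = k[[t]]`, `K = k((t))`, `r = m + 2 ≥ 2`, and let
`ψ ∈ M_r(R)` have `(1,1)` entry of valuation exactly `1`, other diagonal entries units,
and all off-diagonal entries of valuation at least `2`.  Let `h = det ψ`.  Then there is a
matrix `g` with entries in `R`, `det g = 1` and `ψ = g · diag(h, 1, …, 1)`, and `g` is the
unique such matrix over `K = Frac(R)`: any `g' ∈ M_r(K)` with
`ψ = g' · diag(h, 1, …, 1)` (over `K`) equals the image of `g`. -/
theorem statement9 (k : Type) [Field k] (m : ℕ)
    (ψ : Matrix (Fin (m + 2)) (Fin (m + 2)) (PowerSeries k))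
    (h11 : PowerSeries.order (ψ 0 0) = 1)
    (hdiag : ∀ i : Fin (m + 2), i ≠ 0 → IsUnit (ψ i i))
    (hoff : ∀ i j : Fin (m + 2), i ≠ j → 2 ≤ PowerSeries.order (ψ i j)) :
    PowerSeries.order ψ.det = 1 ∧
    ∃ g : Matrix (Fin (m + 2)) (Fin (m + 2)) (PowerSeries k),
      g.det = 1 ∧
      ψ = g * Matrix.diagonal (fun i => if i = 0 then ψ.det else 1) ∧
      ∀ g' : Matrix (Fin (m + 2)) (Fin (m + 2)) (FractionRing (PowerSeries k)),
        ψ.map (algebraMap (PowerSeries k) (FractionRing (PowerSeries k))) =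
          g' * (Matrix.diagonal (fun i => if i = 0 then ψ.det else 1)).map
            (algebraMap (PowerSeries k) (FractionRing (PowerSeries k))) →
        g' = g.map (algebraMap (PowerSeries k) (FractionRing (PowerSeries k))) := by
  have hdet : ψ.det.order = 1 := by
    refine order_det_eq_of_lt_order_offDiag ψ ?_ fun i j hij => ?_
    · simp [order_prod, Fin.sum_univ_succ, h11,
        fun i : Fin (m + 1) => order_zero_of_unit (hdiag i.succ (Fin.succ_ne_zero i))]
    · exact lt_of_lt_of_le (by norm_num) (hoff i j hij)
  have hdet0 : ψ.det ≠ 0 := fun h0 => by simp [h0] at hdet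
  have hcol : ∀ i, ψ.det ∣ ψ i 0 := fun i => dvd_of_order_le hdet0 <| by
    rcases eq_or_ne i 0 with rfl | hi
    · rw [hdet, h11]
    · exact hdet ▸ le_trans (by norm_num) (hoff i 0 hi)
  choose c hc using fun i => dvd_iff_exists_eq_mul_left.mp (hcol i)
  have hfac := Matrix.eq_updateCol_mul_diagonal ψ 0 ψ.det c hc
  refine ⟨hdet, ψ.updateCol 0 c, ?_, hfac, fun g' hg' => ?_⟩
  · exact mul_right_cancel₀ hdet0 ((Matrix.det_updateCol_mul_eq_det ψ 0 _ c hc).trans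
      (one_mul _).symm)
  · set f := algebraMap (PowerSeries k) (FractionRing (PowerSeries k))
    rw [Matrix.diagonal_map (map_zero f)] at hg'
    refine Matrix.eq_of_mul_diagonal_eq_mul_diagonal
      (d := fun i => f (if i = 0 then ψ.det else 1)) (fun i => ?_) ?_
    · split_ifs <;> simp [f, hdet0]
    · rw [← hg', ← Matrix.diagonal_map (map_zero f), ← Matrix.map_mul, ← hfac]
end

section
/- Let k be a field, n ≥ 1, r ≥ 2, S = k[t]/(t^{n+1}), and let ψ = diag(ut, 1, …, 1) ∈ M_r(S) where u ∈ S is a unit. Suppose g ∈ SL_r(S) satisfies g·ψ = diag(vt, 1, …, 1) for some unit v ∈ S. Then g·ψ = ψ (equivalently, v = u), and moreover g has the form: all entries of columns 2 through r agree with the identity matrix, the (1,1) entry is 1, and for i > 1 the (i,1) entry is of the form a_i t^n with a_i ∈ k. -/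
set_option synthInstance.maxHeartbeats 1000000
set_option maxHeartbeats 1000000

/-- The truncated polynomial ring `S = k[t]/(t^{n+1})`. -/
def TruncPoly (A : Type) [CommRing A] (n : ℕ) : Type :=
  Polynomial A ⧸ Ideal.span {(Polynomial.X : Polynomial A) ^ (n + 1)}

noncomputable instance (A : Type) [CommRing A] (n : ℕ) : CommRing (TruncPoly A n) :=
  inferInstanceAs (CommRing (Polynomial A ⧸ Ideal.span {(Polynomial.X : Polynomial A) ^ (n + 1)}))

noncomputable instance (A : Type) [CommRing A] (n : ℕ) : Algebra A (TruncPoly A n) :=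
  inferInstanceAs (Algebra A (Polynomial A ⧸ Ideal.span {(Polynomial.X : Polynomial A) ^ (n + 1)}))

/-- The image of `t` in `A[t]/(t^{n+1})`. -/
noncomputable def tTrunc (A : Type) [CommRing A] (n : ℕ) : TruncPoly A n :=
  Ideal.Quotient.mk _ (Polynomial.X : Polynomial A)

/-!
Comparing `g ψ` with `diag(v t, 1, …, 1)` entry by entry, every column of `g` but the first is
the corresponding column of the identity. So `g` is lower triangular and `1 = det g = g₁₁`,
whence `v t = u t`. Below the diagonal the first column gives `g_{i1} u t = 0`; as `u` is a unit,
`g_{i1}` annihilates `t`, and the annihilator of `t` in `k[t]/(t^{n+1})` is `k t^n`.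
-/

open Matrix Polynomial

namespace TruncPoly

variable {A : Type} [CommRing A] {n : ℕ}

theorem exists_eq_algebraMap_mul_tTrunc_pow_of_mul_tTrunc_eq_zero {x : TruncPoly A n}
    (hx : x * tTrunc A n = 0) : ∃ a : A, x = algebraMap A (TruncPoly A n) a * tTrunc A n ^ n := by
  obtain ⟨p, rfl⟩ := Ideal.Quotient.mk_surjective x
  have hpX : X ^ (n + 1) ∣ p * X := by
    rw [← Ideal.mem_span_singleton, ← Ideal.Quotient.eq_zero_iff_mem, map_mul]
    exact hx
  obtain ⟨q, rfl⟩ : X ^ n ∣ p := by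
    rw [X_pow_dvd_iff] at hpX ⊢
    intro d hd
    simpa only [coeff_mul_X] using hpX (d + 1) (by omega)
  obtain ⟨r, hr⟩ : X ∣ q - C (q.coeff 0) := by simp [X_dvd_iff]
  refine ⟨q.coeff 0, ?_⟩
  change _ = Ideal.Quotient.mk _ (C (q.coeff 0) * X ^ n)
  rw [Ideal.Quotient.eq, Ideal.mem_span_singleton]
  exact ⟨r, by linear_combination (X : A[X]) ^ n * hr⟩

end TruncPoly

namespace Matrix

variable {R : Type*} [CommRing R] {m : ℕ} {g : Matrix (Fin (m + 1)) (Fin (m + 1)) R} {a b : R}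

theorem det_eq_apply_zero_zero_of_apply_eq_one_apply
    (hg : ∀ i j, j ≠ 0 → g i j = (1 : Matrix (Fin (m + 1)) (Fin (m + 1)) R) i j) :
    g.det = g 0 0 := by
  have hlower : g.IsLowerTriangular := fun i j hij =>
    (hg i j (Fin.ne_zero_of_lt hij)).trans (one_apply_ne hij.ne')
  rw [det_of_isLowerTriangular g hlower, Fin.prod_univ_succ]
  simp [hg _ _ (Fin.succ_ne_zero _)]

section FirstDiagonal

variable (h : g * diagonal (fun i => if i = 0 then a else 1) =
  diagonal (fun i => if i = 0 then b else 1))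
include h

theorem apply_mul_diagonal_ite_eq (i j : Fin (m + 1)) :
    g i j * (if j = 0 then a else 1) = diagonal (fun i => if i = 0 then b else 1) i j := by
  simpa only [mul_diagonal] using congr_fun₂ h i j

theorem apply_eq_one_apply_of_mul_diagonal_ite_eq (i : Fin (m + 1)) {j : Fin (m + 1)}
    (hj : j ≠ 0) :
    g i j = (1 : Matrix (Fin (m + 1)) (Fin (m + 1)) R) i j := by
  have hij := apply_mul_diagonal_ite_eq h i j
  rcases eq_or_ne i j with rfl | hne
  · simpa [hj] using hij
  · simpa [hj, hne] using hij

theorem apply_zero_zero_mul_of_mul_diagonal_ite_eq : g 0 0 * a = b := by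
  simpa using apply_mul_diagonal_ite_eq h 0 0

theorem apply_succ_zero_mul_of_mul_diagonal_ite_eq (i : Fin m) : g i.succ 0 * a = 0 := by
  simpa [Fin.succ_ne_zero] using apply_mul_diagonal_ite_eq h i.succ 0

end FirstDiagonal

end Matrix

theorem statement11_general (k : Type) [Field k] (n m : ℕ)
    (u v : TruncPoly k n) (hu : IsUnit u)
    (g : Matrix (Fin (m + 2)) (Fin (m + 2)) (TruncPoly k n))
    (hg : g.det = 1)
    (hgψ : g * Matrix.diagonal (fun i => if i = 0 then u * tTrunc k n else 1) =
      Matrix.diagonal (fun i => if i = 0 then v * tTrunc k n else 1)) :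
    g * Matrix.diagonal (fun i => if i = 0 then u * tTrunc k n else 1) =
      Matrix.diagonal (fun i => if i = 0 then u * tTrunc k n else 1) ∧
    g 0 0 = 1 ∧
    (∀ i j : Fin (m + 2), j ≠ 0 → g i j = if i = j then 1 else 0) ∧
    (∀ i' : Fin (m + 1), ∃ a : k,
      g i'.succ 0 = algebraMap k (TruncPoly k n) a * (tTrunc k n) ^ n) := by
  have hcol : ∀ i j, j ≠ 0 → g i j = (1 : Matrix _ _ _) i j :=
    fun i _ hj => apply_eq_one_apply_of_mul_diagonal_ite_eq hgψ i hj
  have hg00 : g 0 0 = 1 := (det_eq_apply_zero_zero_of_apply_eq_one_apply hcol).symm.trans hg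
  have hvu : v * tTrunc k n = u * tTrunc k n := by
    simpa [hg00] using (apply_zero_zero_mul_of_mul_diagonal_ite_eq hgψ).symm
  have hann (i : Fin (m + 1)) : g i.succ 0 * tTrunc k n = 0 := by
    have hi := apply_succ_zero_mul_of_mul_diagonal_ite_eq hgψ i
    rwa [mul_left_comm, hu.mul_right_eq_zero] at hi
  refine ⟨by rw [hgψ, hvu], hg00, fun i j hj => (hcol i j hj).trans Matrix.one_apply,
    fun i => ?_⟩
  exact TruncPoly.exists_eq_algebraMap_mul_tTrunc_pow_of_mul_tTrunc_eq_zero (hann i)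

/-- Let `k` be a field, `n ≥ 1`, `r = m + 2 ≥ 2`, `S = k[t]/(t^{n+1})`,
and `ψ = diag(ut, 1, …, 1)` with `u ∈ S` a unit.  If `g ∈ SL_r(S)` satisfies
`g·ψ = diag(vt, 1, …, 1)` for a unit `v ∈ S`, then `g·ψ = ψ`, all entries of columns `2`
through `r` of `g` agree with the identity matrix, the `(1,1)` entry of `g` is `1`, and
for `i > 1` the `(i,1)` entry of `g` is of the form `a_i t^n` with `a_i ∈ k`. -/
theorem statement11 (k : Type) [Field k] (n m : ℕ) (hn : 1 ≤ n)
    (u v : TruncPoly k n) (hu : IsUnit u) (hv : IsUnit v)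
    (g : Matrix (Fin (m + 2)) (Fin (m + 2)) (TruncPoly k n))
    (hg : g.det = 1)
    (hgψ : g * Matrix.diagonal (fun i => if i = 0 then u * tTrunc k n else 1) =
      Matrix.diagonal (fun i => if i = 0 then v * tTrunc k n else 1)) :
    g * Matrix.diagonal (fun i => if i = 0 then u * tTrunc k n else 1) =
      Matrix.diagonal (fun i => if i = 0 then u * tTrunc k n else 1) ∧
    g 0 0 = 1 ∧
    (∀ i j : Fin (m + 2), j ≠ 0 → g i j = if i = j then 1 else 0) ∧
    (∀ i' : Fin (m + 1), ∃ a : k,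
      g i'.succ 0 = algebraMap k (TruncPoly k n) a * (tTrunc k n) ^ n) :=
  statement11_general k n m u v hu g hg hgψ
end
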